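/- arXiv:2210.03554 — 5 statements merged into one kernel-verified Lean document; each statement's English description precedes it below -/
import Mathlib

section
/- The set A₀ coincides with the set of probability measures on Ω̄ of the form ν(dx) δ_{τ(x)}(dθ) with τ ∈ 𝒯; that is, A₀ = { ν(dx) δ_{τ(x)}(dθ) : τ ∈ 𝒯 }. -/
open MeasureTheory ProbabilityTheory
open scoped NNReal ENNReal Topology
open scoped Fin.NatCast

namespace LPOS

variable (T : ℕ) (E : Type*) [MeasurableSpace E]

/-- canonical path space E^I, I = {0,…,T} -/
abbrev Path := Fin (T + 1) → E

/-- canonical space Ω̄ = E^I × I -/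
abbrev OmegaBar := Path T E × Fin (T + 1)

/-- the filtration F^X_t = σ(X_s : s ≤ t) on the path space -/
def FX (t : ℕ) : MeasurableSpace (Path T E) :=
  ⨆ s : Fin (T + 1), ⨆ _ : (s : ℕ) ≤ t, MeasurableSpace.comap (fun x => x s) inferInstance

/-- the filtration F^X̄_t = σ(X̄_s : s ≤ t) on Ω̄ -/
def FXbar (t : ℕ) : MeasurableSpace (OmegaBar T E) :=
  ⨆ s : Fin (T + 1), ⨆ _ : (s : ℕ) ≤ t, MeasurableSpace.comap (fun ω => ω.1 s) inferInstance

/-- the filtration F^τ̄_t = σ({τ̄ = 0},…,{τ̄ = t}) on Ω̄ -/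
def Ftau (t : ℕ) : MeasurableSpace (OmegaBar T E) :=
  MeasurableSpace.generateFrom {A | ∃ s : Fin (T + 1), (s : ℕ) ≤ t ∧ A = {ω | ω.2 = s}}

/-- F̄_t = F^X̄_t ∨ F^τ̄_t -/
def Fbar (t : ℕ) : MeasurableSpace (OmegaBar T E) := FXbar T E t ⊔ Ftau T E t

/-- F^{X̄,P̄}_t = F^X̄_t ∨ N_{P̄}(F̄_T) -/
def FXbarP (P : Measure (OmegaBar T E)) (t : ℕ) : MeasurableSpace (OmegaBar T E) :=
  FXbar T E t ⊔ MeasurableSpace.generateFrom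
    {A | ∃ C, MeasurableSet[Fbar T E T] C ∧ P C = 0 ∧ A ⊆ C}

/-- F^{X,ν}_t = F^X_t ∨ N_ν(F^X_T) on the path space -/
def FXnu (ν : Measure (Path T E)) (t : ℕ) : MeasurableSpace (Path T E) :=
  FX T E t ⊔ MeasurableSpace.generateFrom
    {A | ∃ C, MeasurableSet[FX T E T] C ∧ ν C = 0 ∧ A ⊆ C}

/-- "under P, X̄ is a G-Markov chain with transition kernels (π_t)" -/
def IsMarkovWith (P : Measure (OmegaBar T E)) (G : ℕ → MeasurableSpace (OmegaBar T E))
    (π : ℕ → Kernel E E) : Prop :=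
  ∀ t : ℕ, 1 ≤ t → t ≤ T → ∀ B : Set E, MeasurableSet B →
    (P[Set.indicator {ω | ω.1 (t : Fin (T + 1)) ∈ B} (fun _ => (1 : ℝ)) | G (t - 1)]
      =ᵐ[P] fun ω => (π t (ω.1 ((t - 1 : ℕ) : Fin (T + 1))) B).toReal)

/-- ν is the law of the Markov chain with kernels (π_t) and initial law m₀* -/
def IsMarkovLaw (ν : Measure (Path T E)) (π : ℕ → Kernel E E) (m0 : Measure E) : Prop :=
  ν.map (fun x => x 0) = m0 ∧
  ∀ t : ℕ, 1 ≤ t → t ≤ T → ∀ B : Set E, MeasurableSet B →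
    (ν[Set.indicator {x | x (t : Fin (T + 1)) ∈ B} (fun _ => (1 : ℝ)) | FX T E (t - 1)]
      =ᵐ[ν] fun x => (π t (x ((t - 1 : ℕ) : Fin (T + 1))) B).toReal)

/-- A₀ : under P, X̄ is a (plain) Markov chain with initial law m₀* and kernels (π_t),
and τ̄ is an F^{X̄,P̄}-stopping time -/
def A0 (π : ℕ → Kernel E E) (m0 : Measure E) : Set (Measure (OmegaBar T E)) :=
  {P | IsProbabilityMeasure P ∧ P.map (fun ω => ω.1 0) = m0 ∧
    IsMarkovWith T E P (FXbar T E) π ∧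
    ∀ t : ℕ, t ≤ T → MeasurableSet[FXbarP T E P t] {ω | (ω.2 : ℕ) ≤ t}}

/-- A₁ : under P, X̄ is an F̄-Markov chain with initial law m₀* and kernels (π_t) -/
def A1 (π : ℕ → Kernel E E) (m0 : Measure E) : Set (Measure (OmegaBar T E)) :=
  {P | IsProbabilityMeasure P ∧ P.map (fun ω => ω.1 0) = m0 ∧
    IsMarkovWith T E P (Fbar T E) π}

/-- occupation measure μ^P̄_t(B) = P̄(X̄_t ∈ B, τ̄ = t) -/
noncomputable def occMu (P : Measure (OmegaBar T E)) (t : Fin (T + 1)) : Measure E :=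
  (P.restrict {ω | ω.2 = t}).map (fun ω => ω.1 t)

/-- occupation measure m^P̄_t(B) = P̄(X̄_t ∈ B, t < τ̄), t ∈ I∖{T} -/
noncomputable def occM (P : Measure (OmegaBar T E)) (t : Fin T) : Measure E :=
  (P.restrict {ω | (t : ℕ) < (ω.2 : ℕ)}).map (fun ω => ω.1 t.castSucc)

/-- the pair of families of occupation measures induced by a probability measure on Ω̄ -/
instance occMu_finite (P : Measure (OmegaBar T E)) [IsFiniteMeasure P] (t : Fin (T + 1)) :
    IsFiniteMeasure (occMu T E P t) := by
  unfold occMu; infer_instance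

instance occM_finite (P : Measure (OmegaBar T E)) [IsFiniteMeasure P] (t : Fin T) :
    IsFiniteMeasure (occM T E P t) := by
  unfold occM; infer_instance

/-- the pair of families of occupation measures induced by a probability measure on Ω̄ -/
noncomputable def occ (P : ProbabilityMeasure (OmegaBar T E)) :
    (Fin (T + 1) → FiniteMeasure E) × (Fin T → FiniteMeasure E) :=
  (fun t => ⟨occMu T E (P : Measure (OmegaBar T E)) t, inferInstance⟩,
   fun t => ⟨occM T E (P : Measure (OmegaBar T E)) t, inferInstance⟩)

/-- the linear-programming constraint set R -/
def Rset [TopologicalSpace E] (π : ℕ → Kernel E E) (m0 : Measure E) :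
    Set ((Fin (T + 1) → FiniteMeasure E) × (Fin T → FiniteMeasure E)) :=
  {q | (∀ t, q.1 t Set.univ ≤ 1) ∧ (∀ t, q.2 t Set.univ ≤ 1) ∧
    ∀ φ : ℕ → E → ℝ, (∀ t, Continuous (φ t)) →
      ∑ t : Fin (T + 1), ∫ x, φ t x ∂(q.1 t : Measure E)
        = (∫ x, φ 0 x ∂m0) +
          ∑ t : Fin T, ∫ x, ((∫ y, φ ((t : ℕ) + 1) y ∂(π ((t : ℕ) + 1) x)) - φ t x)
            ∂(q.2 t : Measure E)}

noncomputable def Mphi (π : ℕ → Kernel E E) (φ : ℕ → E → ℝ) (t : ℕ)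
    (ω : OmegaBar T E) : ℝ :=
  φ t (ω.1 (t : Fin (T + 1))) -
    ∑ s ∈ Finset.range t,
      ((∫ y, φ (s + 1) y ∂(π (s + 1) (ω.1 (s : Fin (T + 1))))) - φ s (ω.1 (s : Fin (T + 1))))

def sigmaTimes (t : ℕ) : MeasurableSpace (Fin (T + 1)) :=
  MeasurableSpace.generateFrom {S | ∃ s : Fin (T + 1), (s : ℕ) ≤ t ∧ S = {s}}

/-! Under a measure in `A0` the first marginal is a Markov law with kernels `π` and initial law
`m0`; such a law is unique, because by induction on `t` it is determined on `FX t` through the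
π-system of sets `A ∩ {X_{t+1} ∈ B}`, so the marginal is `ν`. Each event `{τ̄ ≤ t}` differs from a
set `fst ⁻¹' S t` with `S t ∈ FX t` by a null set, and the first index `t` with `x ∈ S t` is an
`F^X`-stopping time `τ` with `τ̄ = τ(X̄)` almost surely. Conversely, under `ν(dx) δ_{τ(x)}` the
event `{τ̄ ≤ t}` agrees with `fst ⁻¹' {τ ≤ t}` on the graph of `τ`, whose complement is a null set
in `F̄_T`. -/

open scoped symmDiff

section NullAugmentation

variable {α : Type*} {m mT : MeasurableSpace α} [MeasurableSpace α] {μ : Measure α}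

theorem measurableSet_sup_generateFrom_null_iff {S : Set α} :
    MeasurableSet[m ⊔ MeasurableSpace.generateFrom
        {A | ∃ C, MeasurableSet[mT] C ∧ μ C = 0 ∧ A ⊆ C}] S ↔
      ∃ A, MeasurableSet[m] A ∧ ∃ C, MeasurableSet[mT] C ∧ μ C = 0 ∧ S ∆ A ⊆ C := by
  constructor
  · intro hS
    rw [← @MeasurableSpace.generateFrom_measurableSet _ m,
      MeasurableSpace.generateFrom_sup_generateFrom] at hS
    induction S, hS using MeasurableSpace.generateFrom_induction with
    | hC S hS =>
      rcases hS with hS | ⟨C, hC, hC0, hSC⟩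
      · exact ⟨S, hS, ∅, @MeasurableSet.empty _ mT, measure_empty, by simp⟩
      · exact ⟨∅, @MeasurableSet.empty _ m, C, hC, hC0, (symmDiff_bot S).le.trans hSC⟩
    | empty =>
      exact ⟨∅, @MeasurableSet.empty _ m, ∅, @MeasurableSet.empty _ mT, measure_empty, by simp⟩
    | compl S _ ih =>
      obtain ⟨A, hA, C, hC, hC0, hSA⟩ := ih
      exact ⟨Aᶜ, hA.compl, C, hC, hC0, by rwa [compl_symmDiff_compl]⟩
    | iUnion S _ ih =>
      choose A hA C hC hC0 hSA using ih
      exact ⟨⋃ i, A i, .iUnion hA, ⋃ i, C i, .iUnion hC, measure_iUnion_null hC0,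
        Set.iUnion_symmDiff_iUnion_subset.trans (Set.iUnion_mono hSA)⟩
  · rintro ⟨A, hA, C, hC, hC0, hSA⟩
    rw [← symmDiff_symmDiff_cancel_right A S]
    exact @MeasurableSet.symmDiff _ (m ⊔ _) _ _
      (le_sup_right (α := MeasurableSpace α) _
        (MeasurableSpace.measurableSet_generateFrom ⟨C, hC, hC0, hSA⟩))
      (le_sup_left (α := MeasurableSpace α) _ hA)

end NullAugmentation

section SupGenerateFrom

variable {α : Type*}

theorem sup_eq_generateFrom_inter (m₁ m₂ : MeasurableSpace α) :
    m₁ ⊔ m₂ = MeasurableSpace.generateFrom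
      {s | ∃ a b, MeasurableSet[m₁] a ∧ MeasurableSet[m₂] b ∧ s = a ∩ b} := by
  refine le_antisymm (sup_le (fun a ha => ?_) (fun b hb => ?_))
    (MeasurableSpace.generateFrom_le ?_)
  · exact MeasurableSpace.measurableSet_generateFrom
      ⟨a, Set.univ, ha, .univ, (Set.inter_univ a).symm⟩
  · exact MeasurableSpace.measurableSet_generateFrom
      ⟨Set.univ, b, .univ, hb, (Set.univ_inter b).symm⟩
  · rintro _ ⟨a, b, ha, hb, rfl⟩
    exact (le_sup_left (α := MeasurableSpace α) _ ha).inter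
      (le_sup_right (α := MeasurableSpace α) _ hb)

theorem isPiSystem_inter (m₁ m₂ : MeasurableSpace α) :
    IsPiSystem {s | ∃ a b, MeasurableSet[m₁] a ∧ MeasurableSet[m₂] b ∧ s = a ∩ b} := by
  rintro _ ⟨a, b, ha, hb, rfl⟩ _ ⟨a', b', ha', hb', rfl⟩ -
  exact ⟨a ∩ a', b ∩ b', ha.inter ha', hb.inter hb', Set.inter_inter_inter_comm a b a' b'⟩

end SupGenerateFrom

section Transfer

variable {α β : Type*} {m : MeasurableSpace α} [mα : MeasurableSpace α] [MeasurableSpace β]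

theorem setIntegral_eq_of_forall_measurableSet_eq {G : Type*} [NormedAddCommGroup G]
    [NormedSpace ℝ G] (hm : m ≤ mα) {μ ν : Measure α}
    (hμν : ∀ s, MeasurableSet[m] s → μ s = ν s) {f : α → G} (hf : StronglyMeasurable[m] f)
    {A : Set α} (hA : MeasurableSet[m] A) :
    ∫ x in A, f x ∂μ = ∫ x in A, f x ∂ν := by
  have htrim : μ.trim hm = ν.trim hm := @Measure.ext _ m _ _ fun s hs => by
    rw [trim_measurableSet_eq hm hs, trim_measurableSet_eq hm hs, hμν s hs]
  rw [setIntegral_trim hm hf hA, setIntegral_trim hm hf hA, htrim]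

theorem ae_eq_map_iff_comp {δ : Type*} [MeasurableSpace δ] [MeasurableEq δ] {μ : Measure β}
    {f : β → α} (hf : Measurable f) {g g' : α → δ} (hg : Measurable g) (hg' : Measurable g') :
    g =ᵐ[μ.map f] g' ↔ g ∘ f =ᵐ[μ] g' ∘ f :=
  ae_map_iff hf.aemeasurable (measurableSet_eq_fun hg hg')

theorem condExp_comp_ae_eq (hm : m ≤ mα) {g : β → α} (hg : Measurable g)
    (P : Measure β) [IsFiniteMeasure P] {f : α → ℝ} (hf : StronglyMeasurable f)
    (hfi : Integrable f (P.map g)) :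
    P[f ∘ g | m.comap g] =ᵐ[P] (P.map g)[f | m] ∘ g := by
  have hcomap : m.comap g ≤ ‹MeasurableSpace β› :=
    (MeasurableSpace.comap_mono hm).trans hg.comap_le
  have hce : StronglyMeasurable[m] ((P.map g)[f | m]) := stronglyMeasurable_condExp
  have hceg : AEStronglyMeasurable ((P.map g)[f | m]) (P.map g) :=
    (hce.mono hm).aestronglyMeasurable
  refine (ae_eq_condExp_of_forall_setIntegral_eq hcomap
    ((integrable_map_measure hf.aestronglyMeasurable hg.aemeasurable).mp hfi)
    (fun s _ _ =>
      ((integrable_map_measure hceg hg.aemeasurable).mp integrable_condExp).integrableOn)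
    ?_ (hce.comp_measurable (Measurable.of_comap_le le_rfl)).aestronglyMeasurable).symm
  rintro _ ⟨A, hA, rfl⟩ -
  simp only [Function.comp_apply]
  rw [← setIntegral_map (hm A hA) hceg hg.aemeasurable,
    ← setIntegral_map (hm A hA) hf.aestronglyMeasurable hg.aemeasurable,
    setIntegral_condExp hm hfi hA]

theorem eq_map_graph_of_ae_eq {P : Measure (α × β)} {τ : α → β} (hτ : Measurable τ)
    (h : ∀ᵐ ω ∂P, ω.2 = τ ω.1) : P = (P.map Prod.fst).map (fun x => (x, τ x)) := by
  rw [Measure.map_map (measurable_id'.prodMk hτ) measurable_fst]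
  calc P = P.map id := Measure.map_id.symm
    _ = P.map ((fun x => (x, τ x)) ∘ Prod.fst) :=
      Measure.map_congr (h.mono fun ω hω => Prod.ext rfl hω)

end Transfer

section PathFiltration

variable {T E}

theorem FX_le (t : ℕ) : FX T E t ≤ (inferInstance : MeasurableSpace (Path T E)) :=
  iSup_le fun s => iSup_le fun _ => (measurable_pi_apply s).comap_le

theorem FX_mono : Monotone (FX T E) := fun _ _ h =>
  iSup_le fun s => iSup_le fun hs => le_iSup_of_le s (le_iSup_of_le (hs.trans h) le_rfl)

theorem FX_self : FX T E T = (inferInstance : MeasurableSpace (Path T E)) :=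
  le_antisymm (FX_le T) <| iSup_le fun s =>
    le_iSup_of_le s (le_iSup_of_le (Nat.lt_succ_iff.mp s.isLt) le_rfl)

theorem FX_zero : FX T E 0 = MeasurableSpace.comap (fun x : Path T E => x 0) inferInstance := by
  refine le_antisymm (iSup_le fun s => iSup_le fun hs => ?_)
    (le_iSup_of_le 0 (le_iSup_of_le le_rfl le_rfl))
  obtain rfl : s = 0 := Fin.ext (Nat.le_zero.mp hs)
  exact le_rfl

theorem FX_succ {t : ℕ} (ht : t + 1 ≤ T) :
    FX T E (t + 1) = FX T E t ⊔
      MeasurableSpace.comap (fun x : Path T E => x ((t + 1 : ℕ) : Fin (T + 1))) inferInstance := by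
  have hval : (((t + 1 : ℕ) : Fin (T + 1)) : ℕ) = t + 1 := Fin.val_cast_of_lt (by omega)
  refine le_antisymm (iSup_le fun s => iSup_le fun hs => ?_)
    (sup_le (FX_mono t.le_succ) (le_iSup_of_le _ (le_iSup_of_le hval.le le_rfl)))
  rcases Nat.lt_or_eq_of_le hs with hs | hs
  · exact le_sup_of_le_left (le_iSup_of_le s (le_iSup_of_le (Nat.lt_succ_iff.mp hs) le_rfl))
  · obtain rfl : s = ((t + 1 : ℕ) : Fin (T + 1)) := Fin.ext (hs.trans hval.symm)
    exact le_sup_of_le_right le_rfl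

theorem FXbar_eq_comap (t : ℕ) : FXbar T E t = (FX T E t).comap Prod.fst := by
  simp only [FX, FXbar, MeasurableSpace.comap_iSup, MeasurableSpace.comap_comp]
  rfl

theorem measurable_kernel_apply_FX (κ : Kernel E E) (t : ℕ) {B : Set E} (hB : MeasurableSet B) :
    Measurable[FX T E t] fun x : Path T E => (κ (x (t : Fin (T + 1))) B).toReal :=
  (κ.measurable_coe hB).ennreal_toReal.comp <| Measurable.of_comap_le <|
    le_iSup_of_le _ (le_iSup_of_le ((Fin.val_natCast t (T + 1)).trans_le (Nat.mod_le t _)) le_rfl)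

end PathFiltration

section MarkovLaw

variable {T E} {π : ℕ → Kernel E E} {m0 : Measure E}

theorem isMarkovLaw_map_fst_iff {P : Measure (OmegaBar T E)} [IsFiniteMeasure P] :
    IsMarkovLaw T E (P.map Prod.fst) π m0 ↔
      P.map (fun ω => ω.1 0) = m0 ∧ IsMarkovWith T E P (FXbar T E) π := by
  rw [IsMarkovLaw, Measure.map_map (measurable_pi_apply 0) measurable_fst]
  refine and_congr Iff.rfl (forall₂_congr fun t _ => forall₃_congr fun _ B hB => ?_)
  have hX : MeasurableSet {x : Path T E | x (t : Fin (T + 1)) ∈ B} := measurable_pi_apply _ hB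
  have hkey := condExp_comp_ae_eq (m := FX T E (t - 1)) (FX_le _) measurable_fst P
    (stronglyMeasurable_const.indicator hX) ((integrable_const (1 : ℝ)).indicator hX)
  rw [ae_eq_map_iff_comp measurable_fst
    (stronglyMeasurable_condExp.mono (FX_le _)).measurable
    ((measurable_kernel_apply_FX (π t) (t - 1) hB).mono (FX_le _) le_rfl), FXbar_eq_comap]
  exact ⟨hkey.trans, hkey.symm.trans⟩

variable {Q : Measure (Path T E)} [IsFiniteMeasure Q]

theorem IsMarkovLaw.measureReal_inter_eval_succ (hQ : IsMarkovLaw T E Q π m0) {t : ℕ}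
    (ht : t + 1 ≤ T) {A : Set (Path T E)} (hA : MeasurableSet[FX T E t] A) {B : Set E}
    (hB : MeasurableSet B) :
    Q.real (A ∩ (fun x : Path T E => x ((t + 1 : ℕ) : Fin (T + 1))) ⁻¹' B)
      = ∫ x in A, (π (t + 1) (x (t : Fin (T + 1))) B).toReal ∂Q := by
  have hX : MeasurableSet {x : Path T E | x ((t + 1 : ℕ) : Fin (T + 1)) ∈ B} :=
    measurable_pi_apply _ hB
  have hmarkov := hQ.2 (t + 1) (Nat.le_add_left 1 t) ht B hB
  rw [Nat.add_sub_cancel] at hmarkov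
  rw [← integral_congr_ae (ae_restrict_of_ae hmarkov),
    setIntegral_condExp (FX_le t) ((integrable_const (1 : ℝ)).indicator hX) hA,
    integral_indicator_const _ hX, smul_eq_mul, mul_one, measureReal_restrict_apply hX,
    Set.inter_comm]
  rfl

theorem IsMarkovLaw.eqOn_FX {ν : Measure (Path T E)} [IsFiniteMeasure ν]
    (hQ : IsMarkovLaw T E Q π m0) (hν : IsMarkovLaw T E ν π m0) :
    ∀ t ≤ T, ∀ A, MeasurableSet[FX T E t] A → Q A = ν A := by
  intro t
  induction t with
  | zero =>
    intro _ A hA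
    rw [FX_zero] at hA
    obtain ⟨B, hB, rfl⟩ := hA
    rw [← Measure.map_apply (measurable_pi_apply 0) hB, hQ.1,
      ← Measure.map_apply (measurable_pi_apply 0) hB, hν.1]
  | succ t ih =>
    intro ht A hA
    have hQν := ih (by omega)
    refine ext_on_measurableSpace_of_generate_finite _ _ ?_ (FX_le _)
      ((FX_succ ht).trans (sup_eq_generateFrom_inter _ _)) (isPiSystem_inter _ _)
      (hQν _ .univ) hA
    rintro _ ⟨A', _, hA', ⟨B, hB, rfl⟩, rfl⟩
    have hQA := hQ.measureReal_inter_eval_succ ht hA' hB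
    rw [setIntegral_eq_of_forall_measurableSet_eq (FX_le t) hQν
      (measurable_kernel_apply_FX _ t hB).stronglyMeasurable hA',
      ← hν.measureReal_inter_eval_succ ht hA' hB] at hQA
    exact (measureReal_eq_measureReal_iff ..).mp hQA

theorem IsMarkovLaw.unique {ν : Measure (Path T E)} [IsFiniteMeasure ν]
    (hQ : IsMarkovLaw T E Q π m0) (hν : IsMarkovLaw T E ν π m0) : Q = ν :=
  Measure.ext fun A hA => hQ.eqOn_FX hν T le_rfl A (FX_self (E := E) ▸ hA)

end MarkovLaw

section FirstEntry

variable {α : Type*} {n : ℕ}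

/-- Equals `Fin.last n` when `x` lies in no `S t`, as `sInf ∅ = ⊤`. -/
noncomputable def firstEntry (S : Fin (n + 1) → Set α) (x : α) : Fin (n + 1) :=
  sInf {t | x ∈ S t}

theorem firstEntry_eq_of_forall_le_iff {S : Fin (n + 1) → Set α} {x : α} {i : Fin (n + 1)}
    (h : ∀ t, i ≤ t ↔ x ∈ S t) : firstEntry S x = i := by
  have hS : {t | x ∈ S t} = Set.Ici i := Set.ext fun t => (h t).symm
  rw [firstEntry, hS, csInf_Ici]

theorem firstEntry_le_iff {S : Fin (n + 1) → Set α} {x : α} {t : Fin (n + 1)}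
    (ht : t ≠ Fin.last n) : firstEntry S x ≤ t ↔ ∃ s ≤ t, x ∈ S s := by
  refine ⟨fun h => ?_, fun ⟨s, hst, hs⟩ =>
    (sInf_le (show s ∈ {t | x ∈ S t} from hs)).trans hst⟩
  have hne : {s | x ∈ S s}.Nonempty := by
    refine Set.nonempty_iff_ne_empty.mpr fun hemp => ht (top_le_iff.mp ?_)
    rwa [firstEntry, hemp, sInf_empty] at h
  exact ⟨_, h, csInf_mem hne⟩

theorem measurableSet_firstEntry_le {F : ℕ → MeasurableSpace α} (hF : Monotone F)
    {S : Fin (n + 1) → Set α} (hS : ∀ t : Fin (n + 1), MeasurableSet[F t] (S t)) {t : ℕ}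
    (ht : t ≤ n) :
    MeasurableSet[F t] {x | (firstEntry S x : ℕ) ≤ t} := by
  rcases ht.lt_or_eq with ht | rfl
  · have hset :
        {x | (firstEntry S x : ℕ) ≤ t} = ⋃ s : Fin (n + 1), ⋃ (_ : (s : ℕ) ≤ t), S s := by
      ext x
      have := firstEntry_le_iff (S := S) (x := x) (t := ⟨t, by omega⟩)
        (Fin.ne_of_val_ne (by simp only [Fin.val_last]; omega))
      simpa [Fin.le_def] using this
    rw [hset]
    exact .iUnion fun s => .iUnion fun hs => hF hs _ (hS s)
  · simpa only [Fin.is_le, Set.ofPred_true] using @MeasurableSet.univ _ (F t)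

theorem measurable_firstEntry [MeasurableSpace α] {S : Fin (n + 1) → Set α}
    (hS : ∀ t, MeasurableSet (S t)) : Measurable (firstEntry S) :=
  measurable_of_Iic fun k =>
    measurableSet_firstEntry_le (F := fun _ => inferInstance) monotone_const hS k.is_le

end FirstEntry

section CanonicalSpace

variable {T E}

theorem measurableSet_Fbar_graph {τ : Path T E → Fin (T + 1)} (hτ : Measurable τ) :
    MeasurableSet[Fbar T E T] {ω : OmegaBar T E | ω.2 = τ ω.1} := by
  have hgraph : {ω : OmegaBar T E | ω.2 = τ ω.1}
      = ⋃ k, {ω | ω.2 = k} ∩ Prod.fst ⁻¹' (τ ⁻¹' {k}) := by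
    ext ω
    simp [eq_comm]
  rw [hgraph]
  refine .iUnion fun k => .inter ?_ ?_
  · exact le_sup_right (α := MeasurableSpace (OmegaBar T E)) _
      (MeasurableSpace.measurableSet_generateFrom ⟨k, k.is_le, rfl⟩)
  · refine le_sup_left (α := MeasurableSpace (OmegaBar T E)) _ ?_
    rw [FXbar_eq_comap, FX_self]
    exact ⟨_, hτ (measurableSet_singleton k), rfl⟩

theorem exists_FX_ae_mem_iff_of_measurableSet_FXbarP {P : Measure (OmegaBar T E)} {t : ℕ}
    {G : Set (OmegaBar T E)} (hG : MeasurableSet[FXbarP T E P t] G) :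
    ∃ S, MeasurableSet[FX T E t] S ∧ ∀ᵐ ω ∂P, ω ∈ G ↔ ω.1 ∈ S := by
  obtain ⟨A, hA, C, -, hC0, hGA⟩ := measurableSet_sup_generateFrom_null_iff.mp hG
  rw [FXbar_eq_comap] at hA
  obtain ⟨S, hS, rfl⟩ := hA
  refine ⟨S, hS, measure_mono_null (fun ω hω => hGA (Set.mem_symmDiff.mpr ?_)) hC0⟩
  have hω : ¬(ω ∈ G ↔ ω.1 ∈ S) := hω
  tauto

theorem measurableSet_FXbarP_of_map_graph {ν : Measure (Path T E)}
    {τ : Path T E → Fin (T + 1)} (hτ : Measurable τ) {t : ℕ}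
    (ht : MeasurableSet[FXnu T E ν t] {x | (τ x : ℕ) ≤ t}) :
    MeasurableSet[FXbarP T E (ν.map fun x => (x, τ x)) t]
      {ω : OmegaBar T E | (ω.2 : ℕ) ≤ t} := by
  have hg : Measurable fun x : Path T E => (x, τ x) := measurable_id'.prodMk hτ
  obtain ⟨A, hA, C, hC, hC0, hsub⟩ := measurableSet_sup_generateFrom_null_iff.mp ht
  refine measurableSet_sup_generateFrom_null_iff.mpr ⟨Prod.fst ⁻¹' A, ?_,
    {ω | ω.2 = τ ω.1}ᶜ ∪ Prod.fst ⁻¹' C, (measurableSet_Fbar_graph hτ).compl.union ?_,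
    measure_union_null ?_ ?_, fun ω hω => ?_⟩
  · rw [FXbar_eq_comap]
    exact ⟨A, hA, rfl⟩
  · refine le_sup_left (α := MeasurableSpace (OmegaBar T E)) _ ?_
    rw [FXbar_eq_comap]
    exact ⟨C, hC, rfl⟩
  · have hgraph : MeasurableSet {ω : OmegaBar T E | ω.2 = τ ω.1} :=
      measurableSet_eq_fun measurable_snd (hτ.comp measurable_fst)
    rw [Measure.map_apply hg hgraph.compl]
    simp
  · rw [Measure.map_apply hg (measurable_fst (FX_le T C hC))]
    exact hC0
  · by_cases hωτ : ω.2 = τ ω.1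
    · exact Or.inr (hsub (by simpa [Set.mem_symmDiff, hωτ] using hω))
    · exact Or.inl hωτ

end CanonicalSpace

section A0

variable {T E} {π : ℕ → Kernel E E} {m0 : Measure E} {ν : Measure (Path T E)}

theorem map_graph_mem_A0 [IsProbabilityMeasure ν] (hν : IsMarkovLaw T E ν π m0)
    {τ : Path T E → Fin (T + 1)} (hτ : Measurable τ)
    (hstop : ∀ t : ℕ, t ≤ T → MeasurableSet[FXnu T E ν t] {x | (τ x : ℕ) ≤ t}) :
    ν.map (fun x => (x, τ x)) ∈ A0 T E π m0 := by
  have hg : Measurable fun x : Path T E => (x, τ x) := measurable_id'.prodMk hτ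
  have hfst : (ν.map fun x => (x, τ x)).map Prod.fst = ν := by
    rw [Measure.map_map measurable_fst hg]
    exact Measure.map_id
  obtain ⟨h0, hmarkov⟩ := isMarkovLaw_map_fst_iff.mp (hfst ▸ hν)
  exact ⟨Measure.isProbabilityMeasure_map hg.aemeasurable, h0, hmarkov,
    fun t ht => measurableSet_FXbarP_of_map_graph hτ (hstop t ht)⟩

theorem exists_eq_map_graph_of_mem_A0 [IsFiniteMeasure ν] (hν : IsMarkovLaw T E ν π m0)
    {P : Measure (OmegaBar T E)} (hP : P ∈ A0 T E π m0) :
    ∃ τ : Path T E → Fin (T + 1), Measurable τ ∧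
      (∀ t : ℕ, t ≤ T → MeasurableSet[FXnu T E ν t] {x | (τ x : ℕ) ≤ t}) ∧
      P = ν.map (fun x => (x, τ x)) := by
  obtain ⟨_, hP0, hPmarkov, hPstop⟩ := hP
  have hPν : P.map Prod.fst = ν := (isMarkovLaw_map_fst_iff.mpr ⟨hP0, hPmarkov⟩).unique hν
  choose S hS hPS using fun t : Fin (T + 1) =>
    exists_FX_ae_mem_iff_of_measurableSet_FXbarP (hPstop t t.is_le)
  have hτ : Measurable (firstEntry S) := measurable_firstEntry fun t => FX_le _ _ (hS t)
  refine ⟨firstEntry S, hτ, fun t ht => le_sup_left (α := MeasurableSpace (Path T E)) _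
    (measurableSet_firstEntry_le FX_mono hS ht), ?_⟩
  rw [← hPν]
  refine eq_map_graph_of_ae_eq hτ ?_
  filter_upwards [ae_all_iff.mpr hPS] with ω hω
  exact (firstEntry_eq_of_forall_le_iff hω).symm

end A0

section Thms

variable [MetricSpace E] [CompactSpace E] [Nonempty E] [BorelSpace E]
    [SecondCountableTopology E]

set_option linter.unusedSectionVars false

theorem stmt_7
    (π : ℕ → Kernel E E)
    (m0 : Measure E)
    (ν : Measure (Path T E)) [IsProbabilityMeasure ν]
    (hν : IsMarkovLaw T E ν π m0) :
    A0 T E π m0 =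
      {P | ∃ τ : Path T E → Fin (T + 1), Measurable τ ∧
        (∀ t : ℕ, t ≤ T → MeasurableSet[FXnu T E ν t] {x | (τ x : ℕ) ≤ t}) ∧
        P = ν.map (fun x => (x, τ x))} := by
  ext P
  constructor
  · exact exists_eq_map_graph_of_mem_A0 hν
  · rintro ⟨τ, hτ, hstop, rfl⟩
    exact map_graph_mem_A0 hν hτ hstop

end Thms
end LPOS
end

section
/- A₀ is contained in A₁: every probability measure P̄ on Ω̄ under which X̄ is a Markov chain with initial distribution m₀* and kernels (π_t) and under which τ̄ is an F^{X̄,P̄}-stopping time, also makes X̄ an F̄-Markov chain with initial distribution m₀* and kernels (π_t). -/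
open MeasureTheory ProbabilityTheory
open scoped NNReal ENNReal Topology
open Fin.NatCast

namespace LPOS

variable (T : ℕ) (E : Type*) [MeasurableSpace E]

/-! Since `τ̄` is a stopping time for the `P̄`-augmented filtration `F^{X̄,P̄}`, each event
`{τ̄ = s}` with `s ≤ t` is `P̄`-a.e. equal to an `F^X̄_t`-measurable event. Hence `F̄_t` lies between
`F^X̄_t` and its `P̄`-augmentation, so conditional expectations given `F̄_t` and given `F^X̄_t` agree
`P̄`-a.s., and the `F^X̄`-Markov property transfers verbatim to `F̄`. -/

def aeAugment {Ω : Type*} {m₀ : MeasurableSpace Ω} (μ : Measure[m₀] Ω) (m : MeasurableSpace Ω) :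
    MeasurableSpace Ω where
  MeasurableSet' A := ∃ A', MeasurableSet[m] A' ∧ A =ᵐ[μ] A'
  measurableSet_empty := ⟨∅, @MeasurableSet.empty _ m, ae_eq_refl _⟩
  measurableSet_compl := fun _ ⟨A', hA', hAA'⟩ => ⟨A'ᶜ, hA'.compl, hAA'.compl⟩
  measurableSet_iUnion := fun _ hA => by
    choose A' hA' hAA' using hA
    exact ⟨⋃ i, A' i, MeasurableSet.iUnion hA', Filter.EventuallyEq.countable_iUnion hAA'⟩

section aeAugment

variable {Ω : Type*} [m₀ : MeasurableSpace Ω] {μ : Measure Ω}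

theorem le_aeAugment (m : MeasurableSpace Ω) : m ≤ aeAugment μ m :=
  fun A hA => ⟨A, hA, ae_eq_refl _⟩

theorem measurableSet_aeAugment_of_null (m : MeasurableSpace Ω) {A : Set Ω} (hA : μ A = 0) :
    MeasurableSet[aeAugment μ m] A :=
  ⟨∅, @MeasurableSet.empty _ m, ae_eq_empty.2 hA⟩

theorem condExp_ae_eq_condExp_of_le_aeAugment {F : Type*} [NormedAddCommGroup F]
    [NormedSpace ℝ F] [CompleteSpace F] {m₁ m₂ : MeasurableSpace Ω} (h₁₂ : m₁ ≤ m₂)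
    (h₂ : m₂ ≤ aeAugment μ m₁) (hm₂ : m₂ ≤ m₀) [SigmaFinite (μ.trim (h₁₂.trans hm₂))]
    (f : Ω → F) : μ[f | m₂] =ᵐ[μ] μ[f | m₁] := by
  by_cases hf : Integrable f μ
  swap
  · simp only [condExp_of_not_integrable hf, Filter.EventuallyEq.rfl]
  have := sigmaFiniteTrim_mono (μ := μ) hm₂ h₁₂
  refine (ae_eq_condExp_of_forall_setIntegral_eq hm₂ hf
    (fun _ _ _ => integrable_condExp.integrableOn) (fun s hs _ => ?_)
    (stronglyMeasurable_condExp.mono h₁₂).aestronglyMeasurable).symm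
  obtain ⟨A, hA, hsA⟩ := h₂ s hs
  rw [setIntegral_congr_set hsA, setIntegral_condExp (h₁₂.trans hm₂) hf hA,
    setIntegral_congr_set hsA]

end aeAugment

theorem measurableSet_eq_of_forall_measurableSet_le {Ω : Type*} {m : MeasurableSpace Ω}
    {τ : Ω → ℕ} {t : ℕ} (hτ : ∀ n ≤ t, MeasurableSet[m] {ω | τ ω ≤ n}) :
    ∀ s ≤ t, MeasurableSet[m] {ω | τ ω = s}
  | 0, _ => by simpa only [Nat.le_zero] using hτ 0 (Nat.zero_le t)
  | n + 1, hn => by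
    have hdiff : {ω | τ ω = n + 1} = {ω | τ ω ≤ n + 1} \ {ω | τ ω ≤ n} := by
      ext ω
      simp only [Set.mem_ofPred_eq, Set.mem_sdiff]
      omega
    rw [hdiff]
    exact (hτ (n + 1) hn).diff (hτ n (by omega))

theorem fXbar_mono {s t : ℕ} (h : s ≤ t) : FXbar T E s ≤ FXbar T E t :=
  iSup₂_le fun u hu => le_iSup₂ (f := fun (u : Fin (T + 1)) (_ : (u : ℕ) ≤ t) =>
    MeasurableSpace.comap (fun ω : OmegaBar T E => ω.1 u) inferInstance) u (hu.trans h)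

theorem fXbar_le_fbar (t : ℕ) : FXbar T E t ≤ Fbar T E t := le_sup_left

theorem fbar_le (t : ℕ) : Fbar T E t ≤ (inferInstance : MeasurableSpace (OmegaBar T E)) := by
  refine sup_le (iSup₂_le fun s _ => ?_) (MeasurableSpace.generateFrom_le ?_)
  · exact ((measurable_pi_apply s).comp measurable_fst).comap_le
  · rintro A ⟨s, -, rfl⟩
    exact measurable_snd (measurableSet_singleton s)

omit [MeasurableSpace E] in
theorem ftau_le_of_forall_measurableSet_le {m : MeasurableSpace (OmegaBar T E)} {t : ℕ}
    (hτ : ∀ n ≤ t, MeasurableSet[m] {ω : OmegaBar T E | (ω.2 : ℕ) ≤ n}) : Ftau T E t ≤ m := by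
  refine MeasurableSpace.generateFrom_le ?_
  rintro A ⟨s, hs, rfl⟩
  simpa only [Fin.ext_iff] using measurableSet_eq_of_forall_measurableSet_le hτ s hs

theorem fXbarP_le_aeAugment (P : Measure (OmegaBar T E)) {s t : ℕ} (h : s ≤ t) :
    FXbarP T E P s ≤ aeAugment P (FXbar T E t) := by
  refine sup_le ((fXbar_mono T E h).trans (le_aeAugment _)) (MeasurableSpace.generateFrom_le ?_)
  rintro A ⟨C, -, hC, hAC⟩
  exact measurableSet_aeAugment_of_null _ (measure_mono_null hAC hC)

theorem fbar_le_aeAugment {P : Measure (OmegaBar T E)}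
    (hτ : ∀ t ≤ T, MeasurableSet[FXbarP T E P t] {ω | (ω.2 : ℕ) ≤ t}) {t : ℕ} (ht : t ≤ T) :
    Fbar T E t ≤ aeAugment P (FXbar T E t) :=
  sup_le (le_aeAugment _) <| ftau_le_of_forall_measurableSet_le T E fun n hn =>
    fXbarP_le_aeAugment T E P hn _ (hτ n (hn.trans ht))

theorem IsMarkovWith.of_le_aeAugment {P : Measure (OmegaBar T E)} [IsFiniteMeasure P]
    {G G' : ℕ → MeasurableSpace (OmegaBar T E)} {π : ℕ → Kernel E E}
    (hGG' : ∀ t ≤ T, G t ≤ G' t) (hG' : ∀ t ≤ T, G' t ≤ aeAugment P (G t))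
    (hG'le : ∀ t, G' t ≤ (inferInstance : MeasurableSpace (OmegaBar T E)))
    (hG : IsMarkovWith T E P G π) : IsMarkovWith T E P G' π := fun t ht1 htT B hB =>
  (condExp_ae_eq_condExp_of_le_aeAugment (hGG' _ (by omega)) (hG' _ (by omega))
    (hG'le _) _).trans (hG t ht1 htT B hB)

section Thms

variable [MetricSpace E] [CompactSpace E] [Nonempty E] [BorelSpace E]
    [SecondCountableTopology E]

theorem stmt_9
    (π : ℕ → Kernel E E)
    (m0 : Measure E) :
    A0 T E π m0 ⊆ A1 T E π m0 := by
  rintro P ⟨hprob, hinit, hmarkov, hτ⟩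
  exact ⟨hprob, hinit, hmarkov.of_le_aeAugment T E (fun t _ => fXbar_le_fbar T E t)
    (fun _ ht => fbar_le_aeAugment T E hτ ht) (fbar_le T E)⟩

end Thms
end LPOS
end

section
/- If (X_n)_{n≥1} is i.i.d. given Y, then for every measurable function ψ : E×F → ℝ with E[|ψ(X₁,Y)|] < ∞, the averages (1/n) Σ_{k=1}^n ψ(X_k, Y) converge almost surely, as n → ∞, to the conditional expectation E[ψ(X₁,Y) | Y]. -/
/-!
Let `κ` be the conditional distribution of the sequence `(X_{n+1})_n` given `Y`. For each pair of
measurable sets the hypotheses give the product and equal-marginal identities under `κ y` for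
almost every `y`; testing only the sets of a countable generating π-system of `E` collects the
exceptional null sets into one, so for almost every `y` the coordinates are pairwise independent
and identically distributed under `κ y`. Etemadi's strong law then holds under each such `κ y`.
As `law(Y) ⊗ κ = law(Y, X)`, it transfers to `(Y, X)` almost surely, and the limit
`∫ ψ (ξ 0, Y) dκ(Y)` is a version of `E[ψ (X₁, Y) | Y]`.
-/

open MeasureTheory ProbabilityTheory Filter
open scoped NNReal ENNReal Topology

theorem Set.Countable.generatePiSystem {α : Type*} {S : Set (Set α)} (hS : S.Countable) :
    (generatePiSystem S).Countable := by
  refine ((Set.countable_ofPred_finite_subset hS).image Set.sInter).mono fun s hs => ?_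
  induction hs with
  | @base s hs =>
    exact ⟨{s}, ⟨Set.finite_singleton s, Set.singleton_subset_iff.2 hs⟩, Set.sInter_singleton s⟩
  | inter _ _ _ hs ht =>
    obtain ⟨T₁, ⟨hT₁, hT₁S⟩, rfl⟩ := hs
    obtain ⟨T₂, ⟨hT₂, hT₂S⟩, rfl⟩ := ht
    exact ⟨T₁ ∪ T₂, ⟨hT₁.union hT₂, Set.union_subset hT₁S hT₂S⟩, Set.sInter_union T₁ T₂⟩

theorem MeasurableSpace.exists_countable_isPiSystem_generateFrom (E : Type*)
    [m : MeasurableSpace E] [CountablyGenerated E] :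
    ∃ S : Set (Set E), S.Countable ∧ IsPiSystem S ∧ m = generateFrom S :=
  ⟨generatePiSystem (countableGeneratingSet E),
    countable_countableGeneratingSet.generatePiSystem, isPiSystem_generatePiSystem _,
    by rw [generateFrom_generatePiSystem_eq, generateFrom_countableGeneratingSet]⟩

section PiSystem

open MeasurableSpace

variable {Ω E : Type*} {mΩ : MeasurableSpace Ω} {mE : MeasurableSpace E} {P : Measure Ω}
  {S : Set (Set E)} {f g : Ω → E}

theorem identDistrib_of_isPiSystem [IsFiniteMeasure P] (hgen : mE = generateFrom S)
    (hS : IsPiSystem S) (hf : Measurable f) (hg : Measurable g)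
    (h : ∀ s ∈ S, P (f ⁻¹' s) = P (g ⁻¹' s)) : IdentDistrib f g P P := by
  refine ⟨hf.aemeasurable, hg.aemeasurable,
    ext_of_generate_finite S hgen hS (fun s hs => ?_) ?_⟩
  · have hs' : MeasurableSet s := hgen ▸ measurableSet_generateFrom hs
    rw [Measure.map_apply hf hs', Measure.map_apply hg hs']
    exact h s hs
  · rw [Measure.map_apply hf MeasurableSet.univ, Measure.map_apply hg MeasurableSet.univ]
    rfl

theorem indepFun_of_isPiSystem [IsProbabilityMeasure P] (hgen : mE = generateFrom S)
    (hS : IsPiSystem S) (hf : Measurable f) (hg : Measurable g)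
    (h : ∀ s ∈ S, ∀ t ∈ S, P (f ⁻¹' s ∩ g ⁻¹' t) = P (f ⁻¹' s) * P (g ⁻¹' t)) :
    IndepFun f g P := by
  rw [IndepFun_iff_Indep]
  refine IndepSets.indep hf.comap_le hg.comap_le (hS.comap f) (hS.comap g)
    (by rw [hgen, MeasurableSpace.comap_generateFrom]; rfl)
    (by rw [hgen, MeasurableSpace.comap_generateFrom]; rfl) ?_
  rw [IndepSets_iff]
  rintro _ _ ⟨s, hs, rfl⟩ ⟨t, ht, rfl⟩
  exact h s hs t ht

end PiSystem

namespace ProbabilityTheory.Kernel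

open MeasurableSpace

variable {α Ω E : Type*} {mα : MeasurableSpace α} {mΩ : MeasurableSpace Ω} [MeasurableSpace E]
  [CountablyGenerated E] {κ : Kernel α Ω} {ν : Measure α} {f g : Ω → E}

theorem ae_identDistrib_of_forall_ae [IsFiniteKernel κ] (hf : Measurable f) (hg : Measurable g)
    (h : ∀ s, MeasurableSet s → ∀ᵐ a ∂ν, κ a (f ⁻¹' s) = κ a (g ⁻¹' s)) :
    ∀ᵐ a ∂ν, IdentDistrib f g (κ a) (κ a) := by
  obtain ⟨S, hSc, hS, hgen⟩ := exists_countable_isPiSystem_generateFrom E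
  have hSm : ∀ s ∈ S, MeasurableSet s := fun s hs => hgen ▸ measurableSet_generateFrom hs
  filter_upwards [(ae_ball_iff hSc).2 fun s hs => h s (hSm s hs)] with a ha
  exact identDistrib_of_isPiSystem hgen hS hf hg ha

theorem IndepFun.ae_indepFun [IsMarkovKernel κ] (hf : Measurable f) (hg : Measurable g)
    (h : IndepFun f g κ ν) : ∀ᵐ a ∂ν, ProbabilityTheory.IndepFun f g (κ a) := by
  obtain ⟨S, hSc, hS, hgen⟩ := exists_countable_isPiSystem_generateFrom E
  have hSm : ∀ s ∈ S, MeasurableSet s := fun s hs => hgen ▸ measurableSet_generateFrom hs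
  rw [indepFun_iff_measure_inter_preimage_eq_mul] at h
  filter_upwards [(ae_ball_iff hSc).2 fun s hs => (ae_ball_iff hSc).2 fun t ht =>
    h s t (hSm s hs) (hSm t ht)] with a ha
  exact indepFun_of_isPiSystem hgen hS hf hg ha

theorem ae_pairwise_indepFun_of_lt [IsMarkovKernel κ] {ι : Type*} [Countable ι] [LinearOrder ι]
    {f : ι → Ω → E} (hf : ∀ i, Measurable (f i))
    (h : ∀ i j, i < j → IndepFun (f i) (f j) κ ν) :
    ∀ᵐ a ∂ν, Pairwise fun i j => ProbabilityTheory.IndepFun (f i) (f j) (κ a) := by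
  have hlt : ∀ᵐ a ∂ν, ∀ i j, i < j → ProbabilityTheory.IndepFun (f i) (f j) (κ a) := by
    refine ae_all_iff.2 fun i => ae_all_iff.2 fun j => ?_
    by_cases hij : i < j
    · filter_upwards [(h i j hij).ae_indepFun (hf i) (hf j)] with a ha using fun _ => ha
    · exact ae_of_all _ fun a h' => absurd h' hij
  filter_upwards [hlt] with a ha i j hij
  rcases hij.lt_or_gt with hij | hji
  exacts [ha i j hij, (ha j i hji).symm]

end ProbabilityTheory.Kernel

section StrongLaw

variable {Ω E F : Type*} [MeasurableSpace E] {mF : MeasurableSpace F} {ψ : E × F → ℝ}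

theorem strong_law_ae_compProd {ν : Measure F} [SFinite ν] {κ : Kernel F (ℕ → E)}
    [IsSFiniteKernel κ]
    (hident : ∀ᵐ y ∂ν, ∀ i, IdentDistrib (fun ξ : ℕ → E => ξ i) (fun ξ => ξ 0) (κ y) (κ y))
    (hindep : ∀ᵐ y ∂ν, Pairwise fun i j =>
      IndepFun (fun ξ : ℕ → E => ξ i) (fun ξ => ξ j) (κ y))
    (hψ : Measurable ψ) (hint : Integrable (fun p : F × (ℕ → E) => ψ (p.2 0, p.1)) (ν ⊗ₘ κ)) :
    ∀ᵐ p ∂(ν ⊗ₘ κ), Tendsto (fun n : ℕ => (∑ k ∈ Finset.range n, ψ (p.2 k, p.1)) / n) atTop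
      (𝓝 (∫ ξ, ψ (ξ 0, p.1) ∂κ p.1)) := by
  have hψk : ∀ k, Measurable fun p : F × (ℕ → E) => ψ (p.2 k, p.1) := fun k =>
    hψ.comp (((measurable_pi_apply k).comp measurable_snd).prodMk measurable_fst)
  have hlim : Measurable fun p : F × (ℕ → E) => ∫ ξ, ψ (ξ 0, p.1) ∂κ p.1 :=
    ((hψk 0).stronglyMeasurable.integral_kernel_prod_right
      (f := fun y (ξ : ℕ → E) => ψ (ξ 0, y))).measurable.comp measurable_fst
  refine Measure.ae_compProd_of_ae_ae
    (measurableSet_tendsto_fun (fun n => (Finset.measurable_sum _ fun k _ => hψk k).div_const _)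
      hlim) ?_
  filter_upwards [hident, hindep,
    ((Measure.integrable_compProd_iff hint.aestronglyMeasurable).1 hint).1] with y hid hind hi
  have hψy : Measurable fun x : E => ψ (x, y) := hψ.comp (measurable_id.prodMk measurable_const)
  filter_upwards [strong_law_ae_real (fun k (ξ : ℕ → E) => ψ (ξ k, y)) hi
    (fun i j hij => (hind hij).comp hψy hψy) fun i => (hid i).comp hψy] with ξ hξ using hξ

theorem strong_law_ae_condExp {m0 : MeasurableSpace Ω} [StandardBorelSpace E] [Nonempty E]
    {μ : Measure Ω} [IsFiniteMeasure μ] {Z : Ω → ℕ → E} {Y : Ω → F} (hZ : Measurable Z)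
    (hY : Measurable Y)
    (hident : ∀ᵐ y ∂μ.map Y, ∀ i,
      IdentDistrib (fun ξ : ℕ → E => ξ i) (fun ξ => ξ 0)
        (condDistrib Z Y μ y) (condDistrib Z Y μ y))
    (hindep : ∀ᵐ y ∂μ.map Y, Pairwise fun i j =>
      IndepFun (fun ξ : ℕ → E => ξ i) (fun ξ => ξ j) (condDistrib Z Y μ y))
    (hψ : Measurable ψ) (hint : Integrable (fun ω => ψ (Z ω 0, Y ω)) μ) :
    ∀ᵐ ω ∂μ, Tendsto (fun n : ℕ => (∑ k ∈ Finset.range n, ψ (Z ω k, Y ω)) / n) atTop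
      (𝓝 (μ[fun ω => ψ (Z ω 0, Y ω) | mF.comap Y] ω)) := by
  have hf : Measurable fun p : F × (ℕ → E) => ψ (p.2 0, p.1) :=
    hψ.comp (((measurable_pi_apply 0).comp measurable_snd).prodMk measurable_fst)
  have hYZ : AEMeasurable (fun ω => (Y ω, Z ω)) μ := hY.aemeasurable.prodMk hZ.aemeasurable
  have hint' : Integrable (fun p : F × (ℕ → E) => ψ (p.2 0, p.1))
      (μ.map Y ⊗ₘ condDistrib Z Y μ) := by
    rwa [compProd_map_condDistrib hZ.aemeasurable,
      integrable_map_measure hf.aestronglyMeasurable hYZ]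
  have hlim := strong_law_ae_compProd hident hindep hψ hint'
  rw [compProd_map_condDistrib hZ.aemeasurable] at hlim
  filter_upwards [ae_of_ae_map hYZ hlim,
    condExp_prod_ae_eq_integral_condDistrib hY hZ.aemeasurable hf.stronglyMeasurable hint]
    with ω hω hce
  rwa [hce]

end StrongLaw

theorem ae_map_eq_of_toReal_comp_ae_eq {Ω F : Type*} {m0 : MeasurableSpace Ω}
    {mF : MeasurableSpace F} {μ : Measure Ω} {Y : Ω → F} {a b : F → ℝ≥0∞} (hY : Measurable Y)
    (ha : Measurable a) (hb : Measurable b) (ha_top : ∀ y, a y ≠ ∞) (hb_top : ∀ y, b y ≠ ∞)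
    (h : (fun ω => (a (Y ω)).toReal) =ᵐ[μ] fun ω => (b (Y ω)).toReal) :
    ∀ᵐ y ∂μ.map Y, a y = b y := by
  rw [ae_map_iff hY.aemeasurable (measurableSet_eq_fun ha hb)]
  filter_upwards [h] with ω hω using (ENNReal.toReal_eq_toReal_iff' (ha_top _) (hb_top _)).1 hω

section CondDistrib

variable {Ω Ω' E F : Type*} {m0 : MeasurableSpace Ω} [MeasurableSpace Ω'] [StandardBorelSpace Ω']
  [Nonempty Ω'] [MeasurableSpace E] {mF : MeasurableSpace F} {μ : Measure Ω} [IsFiniteMeasure μ]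
  {Z : Ω → Ω'} {Y : Ω → F}

theorem ae_condDistrib_eq_of_condExp_eq (hZ : Measurable Z) (hY : Measurable Y) {s t : Set Ω'}
    (hs : MeasurableSet s) (ht : MeasurableSet t)
    (h : μ⟦Z ⁻¹' s | mF.comap Y⟧ =ᵐ[μ] μ⟦Z ⁻¹' t | mF.comap Y⟧) :
    ∀ᵐ y ∂μ.map Y, condDistrib Z Y μ y s = condDistrib Z Y μ y t :=
  ae_map_eq_of_toReal_comp_ae_eq hY (Kernel.measurable_coe _ hs) (Kernel.measurable_coe _ ht)
    (fun _ => measure_ne_top _ _) (fun _ => measure_ne_top _ _)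
    ((condDistrib_ae_eq_condExp hY hZ hs).trans
      (h.trans (condDistrib_ae_eq_condExp hY hZ ht).symm))

theorem ProbabilityTheory.Kernel.indepFun_condDistrib_of_condExp (hZ : Measurable Z)
    (hY : Measurable Y) {f g : Ω' → E} (hf : Measurable f) (hg : Measurable g)
    (h : ∀ s t, MeasurableSet s → MeasurableSet t →
      μ⟦Z ⁻¹' (f ⁻¹' s ∩ g ⁻¹' t) | mF.comap Y⟧
        =ᵐ[μ] μ⟦Z ⁻¹' (f ⁻¹' s) | mF.comap Y⟧ * μ⟦Z ⁻¹' (g ⁻¹' t) | mF.comap Y⟧) :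
    Kernel.IndepFun f g (condDistrib Z Y μ) (μ.map Y) := by
  rw [Kernel.indepFun_iff_measure_inter_preimage_eq_mul]
  intro s t hs ht
  have hs' : MeasurableSet (f ⁻¹' s) := hf hs
  have ht' : MeasurableSet (g ⁻¹' t) := hg ht
  refine ae_map_eq_of_toReal_comp_ae_eq hY (Kernel.measurable_coe _ (hs'.inter ht'))
    ((Kernel.measurable_coe _ hs').mul (Kernel.measurable_coe _ ht'))
    (fun _ => measure_ne_top _ _) (fun _ => ENNReal.mul_ne_top (measure_ne_top _ _)
      (measure_ne_top _ _)) ?_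
  filter_upwards [condDistrib_ae_eq_condExp hY hZ (hs'.inter ht'),
    condDistrib_ae_eq_condExp hY hZ hs', condDistrib_ae_eq_condExp hY hZ ht', h s t hs ht]
    with ω h_st h_s h_t h_mul
  rw [ENNReal.toReal_mul]
  exact h_st.trans (h_mul.trans (congr_arg₂ (· * ·) h_s.symm h_t.symm))

end CondDistrib

theorem condExp_indicator_inter_eq_mul_of_forall_fin {Ω E : Type*} {m m0 : MeasurableSpace Ω}
    [MeasurableSpace E] {μ : Measure Ω} [IsFiniteMeasure μ] (hm : m ≤ m0) {Z : Ω → ℕ → E}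
    (h : ∀ (n : ℕ) (B : Fin n → Set E), (∀ i, MeasurableSet (B i)) →
      μ⟦{ω | ∀ i : Fin n, Z ω i ∈ B i} | m⟧
        =ᵐ[μ] fun ω => ∏ i : Fin n, (μ⟦{ω | Z ω i ∈ B i} | m⟧) ω)
    {i j : ℕ} (hij : i < j) {s t : Set E} (hs : MeasurableSet s) (ht : MeasurableSet t) :
    μ⟦{ω | Z ω i ∈ s ∧ Z ω j ∈ t} | m⟧
      =ᵐ[μ] μ⟦{ω | Z ω i ∈ s} | m⟧ * μ⟦{ω | Z ω j ∈ t} | m⟧ := by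
  let B : Fin (j + 1) → Set E := fun l =>
    if (l : ℕ) = i then s else if (l : ℕ) = j then t else Set.univ
  have hB : ∀ l, MeasurableSet (B l) := fun l => by
    dsimp only [B]
    split_ifs
    exacts [hs, ht, MeasurableSet.univ]
  have hset : {ω | ∀ l : Fin (j + 1), Z ω l ∈ B l} = {ω | Z ω i ∈ s ∧ Z ω j ∈ t} := by
    ext ω
    refine ⟨fun hω => ⟨by simpa [B] using hω ⟨i, by omega⟩,
      by simpa [B, hij.ne'] using hω ⟨j, by omega⟩⟩, fun hω l => ?_⟩
    dsimp only [B]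
    split_ifs with hli hlj
    exacts [hli.symm ▸ hω.1, hlj.symm ▸ hω.2, trivial]
  have hprod : ∀ ω, ∏ l : Fin (j + 1), (μ⟦{ω | Z ω l ∈ B l} | m⟧) ω
      = (μ⟦{ω | Z ω i ∈ s} | m⟧ * μ⟦{ω | Z ω j ∈ t} | m⟧) ω := by
    intro ω
    rw [Fintype.prod_eq_mul ⟨i, by omega⟩ ⟨j, by omega⟩ (by simpa [Fin.ext_iff] using hij.ne)
      fun l hl => ?_]
    · simp [B, hij.ne']
    · have hl' : B l = Set.univ := by simp [B, Fin.ext_iff] at hl ⊢; simp [hl.1, hl.2]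
      simp [hl', condExp_const hm]
  exact hset ▸ (h _ B hB).trans (ae_of_all _ hprod)

theorem stmt_17_general
    {Ω E F : Type*} [m0 : MeasurableSpace Ω]
    [MetricSpace E] [CompleteSpace E] [TopologicalSpace.SeparableSpace E] [MeasurableSpace E] [BorelSpace E]
    [MeasurableSpace F]
    (μ : Measure Ω) [IsProbabilityMeasure μ]
    (X : ℕ → Ω → E) (Y : Ω → F)
    (hX : ∀ n, Measurable (X n)) (hY : Measurable Y)
    -- conditional independence given Y :
    (h_indep : ∀ (n : ℕ) (B : Fin n → Set E), (∀ i, MeasurableSet (B i)) →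
      (μ[Set.indicator {ω | ∀ i : Fin n, X ((i : ℕ) + 1) ω ∈ B i} (fun _ => (1 : ℝ)) |
          MeasurableSpace.comap Y inferInstance]
        =ᵐ[μ] fun ω => ∏ i : Fin n,
          (μ[Set.indicator {ω' | X ((i : ℕ) + 1) ω' ∈ B i} (fun _ => (1 : ℝ)) |
            MeasurableSpace.comap Y inferInstance]) ω))
    -- identical conditional distributions given Y :
    (h_ident : ∀ (n k : ℕ) (B : Set E), 1 ≤ n → 1 ≤ k → MeasurableSet B →
      (μ[Set.indicator {ω | X n ω ∈ B} (fun _ => (1 : ℝ)) | MeasurableSpace.comap Y inferInstance]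
        =ᵐ[μ]
       μ[Set.indicator {ω | X k ω ∈ B} (fun _ => (1 : ℝ)) | MeasurableSpace.comap Y inferInstance])) :
    ∀ ψ : E × F → ℝ, Measurable ψ →
      Integrable (fun ω => ψ (X 1 ω, Y ω)) μ →
      ∀ᵐ ω ∂μ, Tendsto
        (fun n : ℕ => (1 / (n : ℝ)) * ∑ k ∈ Finset.range n, ψ (X (k + 1) ω, Y ω))
        atTop
        (𝓝 ((μ[fun ω' => ψ (X 1 ω', Y ω') | MeasurableSpace.comap Y inferInstance]) ω)) := by
  intro ψ hψ hint
  have : Nonempty E := ⟨X 0 (nonempty_of_isProbabilityMeasure μ).some⟩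
  let Z : Ω → ℕ → E := fun ω n => X (n + 1) ω
  have hZ : Measurable Z := measurable_pi_lambda _ fun n => hX (n + 1)
  have hident : ∀ᵐ y ∂μ.map Y, ∀ i, IdentDistrib (fun ξ : ℕ → E => ξ i) (fun ξ => ξ 0)
      (condDistrib Z Y μ y) (condDistrib Z Y μ y) :=
    ae_all_iff.2 fun i => Kernel.ae_identDistrib_of_forall_ae (measurable_pi_apply i)
      (measurable_pi_apply 0) fun s hs => ae_condDistrib_eq_of_condExp_eq hZ hY
        (measurable_pi_apply i hs) (measurable_pi_apply 0 hs)
        (h_ident (i + 1) 1 s (Nat.le_add_left 1 i) le_rfl hs)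
  have hindep : ∀ᵐ y ∂μ.map Y, Pairwise fun i j =>
      IndepFun (fun ξ : ℕ → E => ξ i) (fun ξ => ξ j) (condDistrib Z Y μ y) :=
    Kernel.ae_pairwise_indepFun_of_lt measurable_pi_apply fun i j hij =>
      Kernel.indepFun_condDistrib_of_condExp hZ hY (measurable_pi_apply i) (measurable_pi_apply j)
        fun _ _ hs ht => condExp_indicator_inter_eq_mul_of_forall_fin hY.comap_le h_indep hij hs ht
  simpa only [one_div_mul_eq_div] using strong_law_ae_condExp hZ hY hident hindep hψ hint

theorem stmt_17
    {Ω E F : Type*} [m0 : MeasurableSpace Ω]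
    [MetricSpace E] [CompleteSpace E] [TopologicalSpace.SeparableSpace E] [MeasurableSpace E] [BorelSpace E]
    [MetricSpace F] [CompleteSpace F] [TopologicalSpace.SeparableSpace F] [MeasurableSpace F] [BorelSpace F]
    (μ : Measure Ω) [IsProbabilityMeasure μ]
    (hcomplete : ∀ s t : Set Ω, s ⊆ t → MeasurableSet t → μ t = 0 → MeasurableSet s)
    (X : ℕ → Ω → E) (Y : Ω → F)
    (hX : ∀ n, Measurable (X n)) (hY : Measurable Y)
    -- conditional independence given Y :
    (h_indep : ∀ (n : ℕ) (B : Fin n → Set E), (∀ i, MeasurableSet (B i)) →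
      (μ[Set.indicator {ω | ∀ i : Fin n, X ((i : ℕ) + 1) ω ∈ B i} (fun _ => (1 : ℝ)) |
          MeasurableSpace.comap Y inferInstance]
        =ᵐ[μ] fun ω => ∏ i : Fin n,
          (μ[Set.indicator {ω' | X ((i : ℕ) + 1) ω' ∈ B i} (fun _ => (1 : ℝ)) |
            MeasurableSpace.comap Y inferInstance]) ω))
    -- identical conditional distributions given Y :
    (h_ident : ∀ (n k : ℕ) (B : Set E), 1 ≤ n → 1 ≤ k → MeasurableSet B →
      (μ[Set.indicator {ω | X n ω ∈ B} (fun _ => (1 : ℝ)) | MeasurableSpace.comap Y inferInstance]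
        =ᵐ[μ]
       μ[Set.indicator {ω | X k ω ∈ B} (fun _ => (1 : ℝ)) | MeasurableSpace.comap Y inferInstance])) :
    ∀ ψ : E × F → ℝ, Measurable ψ →
      Integrable (fun ω => ψ (X 1 ω, Y ω)) μ →
      ∀ᵐ ω ∂μ, Tendsto
        (fun n : ℕ => (1 / (n : ℝ)) * ∑ k ∈ Finset.range n, ψ (X (k + 1) ω, Y ω))
        atTop
        (𝓝 ((μ[fun ω' => ψ (X 1 ω', Y ω') | MeasurableSpace.comap Y inferInstance]) ω)) :=
  stmt_17_general (m0 := m0) μ X Y hX hY h_indep h_ident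
end

section
/- Let φ ∈ C(I×E) and let κ be a randomized stopping time. Then Dynkin's formula holds in expectation: Σ_{t=0}^T E[φ(t, X_t) κ({t})] = E[φ(0, X₀)] + Σ_{t=0}^{T−1} E[ L(φ)(t, X_t) κ({t+1,…,T}) ]. -/
open MeasureTheory ProbabilityTheory

/-!
With `Gₜ(ω) = κ(ω)({t,…,T})` one has `κ({t}) = Gₜ - Gₜ₊₁`, `G₀ = 1` and `G_{T+1} = 0`, so summation
by parts turns the left-hand side into
`E[φ(0,X₀)] + Σ_{t<T} (E[φ(t+1,X_{t+1}) G_{t+1}] - E[φ(t,X_t) G_{t+1}])`.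
Since `G_{t+1} = 1 - κ({0,…,t})` is `F_t`-measurable, the Markov property lets us replace
`φ(t+1,X_{t+1})` by `∫ φ(t+1,·) dπ_{t+1}(X_t,·)` in the first expectation. The Markov property is
only assumed for indicators; it extends to bounded measurable functions because on every
`F_t`-measurable set the law of `X_{t+1}` is the law of `X_t` composed with `π_{t+1}`.
-/

theorem MeasureTheory.Measure.integral_comp {α β F : Type*} [MeasurableSpace α]
    [MeasurableSpace β] [NormedAddCommGroup F] [NormedSpace ℝ F]
    {ν : Measure α} {κ : Kernel α β} {f : β → F} (hf : Integrable f (κ ∘ₘ ν)) :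
    ∫ y, f y ∂(κ ∘ₘ ν) = ∫ x, ∫ y, f y ∂κ x ∂ν := by
  rw [Measure.comp_eq_comp_const_apply] at hf ⊢
  rw [Kernel.integral_comp hf, Kernel.const_apply]

theorem ProbabilityTheory.Kernel.norm_integral_le_of_norm_le {α β F : Type*} [MeasurableSpace α]
    [MeasurableSpace β] [NormedAddCommGroup F] [NormedSpace ℝ F] (κ : Kernel α β)
    [IsMarkovKernel κ] {f : β → F} {C : ℝ} (hf : ∀ y, ‖f y‖ ≤ C) (x : α) :
    ‖∫ y, f y ∂κ x‖ ≤ C := by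
  simpa using norm_integral_le_of_norm_le_const (μ := κ x) (ae_of_all _ hf)

section MarkovProperty

variable {Ω E : Type*} [MeasurableSpace E] {m m₀ : MeasurableSpace Ω} {μ : Measure Ω}
  [IsFiniteMeasure μ] {X Y : Ω → E} {π : Kernel E E}

theorem integrable_integral_kernel_comp [IsMarkovKernel π] {ψ : E → ℝ} (hψ : Measurable ψ)
    {C : ℝ} (hψC : ∀ x, ‖ψ x‖ ≤ C) (hX : Measurable[m₀] X) :
    Integrable (fun ω => ∫ y, ψ y ∂π (X ω)) μ :=
  .of_bound (hψ.stronglyMeasurable.integral_kernel.comp_measurable hX).aestronglyMeasurable C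
    (ae_of_all _ fun _ => π.norm_integral_le_of_norm_le hψC _)

theorem map_restrict_eq_comp_map_restrict [IsFiniteKernel π] (hm : m ≤ m₀)
    (hX : Measurable[m₀] X) (hY : Measurable[m₀] Y)
    (hM : ∀ B : Set E, MeasurableSet B →
      μ[{ω | Y ω ∈ B}.indicator (fun _ => (1 : ℝ)) | m] =ᵐ[μ] fun ω => (π (X ω) B).toReal)
    {A : Set Ω} (hA : MeasurableSet[m] A) :
    (μ.restrict A).map Y = π ∘ₘ (μ.restrict A).map X := by
  ext B hB
  rw [← ENNReal.toReal_eq_toReal_iff' (measure_ne_top _ _) (measure_ne_top _ _)]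
  change ((μ.restrict A).map Y).real B = (π ∘ₘ (μ.restrict A).map X).real B
  calc ((μ.restrict A).map Y).real B
      = ∫ ω in A, {ω | Y ω ∈ B}.indicator (fun _ => (1 : ℝ)) ω ∂μ := by
        rw [map_measureReal_apply hY hB]; exact (integral_indicator_one (hY hB)).symm
    _ = ∫ ω in A, (π (X ω) B).toReal ∂μ := by
        rw [← setIntegral_condExp hm ((integrable_const 1).indicator (hY hB)) hA]
        exact setIntegral_congr_ae (hm A hA) ((hM B hB).mono fun ω h _ => h)
    _ = (π ∘ₘ (μ.restrict A).map X).real B := by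
        rw [measureReal_def, Measure.bind_apply hB π.aemeasurable,
          lintegral_map (π.measurable_coe hB) hX, integral_toReal]
        · exact ((π.measurable_coe hB).comp hX).aemeasurable
        · exact ae_of_all _ fun ω => measure_lt_top _ _

variable [IsMarkovKernel π]

theorem integral_kernel_comp_ae_eq_condExp (hm : m ≤ m₀) (hX : Measurable[m] X)
    (hY : Measurable[m₀] Y)
    (hM : ∀ B : Set E, MeasurableSet B →
      μ[{ω | Y ω ∈ B}.indicator (fun _ => (1 : ℝ)) | m] =ᵐ[μ] fun ω => (π (X ω) B).toReal)
    {ψ : E → ℝ} (hψ : Measurable ψ) {C : ℝ} (hψC : ∀ x, ‖ψ x‖ ≤ C) :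
    (fun ω => ∫ y, ψ y ∂π (X ω)) =ᵐ[μ] μ[ψ ∘ Y | m] := by
  have hX₀ : Measurable[m₀] X := hX.mono hm le_rfl
  refine ae_eq_condExp_of_forall_setIntegral_eq hm
    (.of_bound (hψ.comp hY).aestronglyMeasurable C (ae_of_all _ fun ω => hψC _))
    (fun s _ _ => (integrable_integral_kernel_comp hψ hψC hX₀).integrableOn)
    (fun s hs _ => ?_)
    (hψ.stronglyMeasurable.integral_kernel.comp_measurable hX).aestronglyMeasurable
  calc ∫ ω in s, ∫ y, ψ y ∂π (X ω) ∂μ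
      = ∫ y, ψ y ∂(π ∘ₘ (μ.restrict s).map X) := by
        rw [Measure.integral_comp (.of_bound hψ.aestronglyMeasurable C (ae_of_all _ hψC)),
          integral_map hX₀.aemeasurable hψ.stronglyMeasurable.integral_kernel.aestronglyMeasurable]
    _ = ∫ ω in s, ψ (Y ω) ∂μ := by
        rw [← map_restrict_eq_comp_map_restrict hm hX₀ hY hM hs,
          integral_map hY.aemeasurable hψ.aestronglyMeasurable]

theorem integral_comp_mul_eq_integral_kernel_mul (hm : m ≤ m₀) (hX : Measurable[m] X)
    (hY : Measurable[m₀] Y)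
    (hM : ∀ B : Set E, MeasurableSet B →
      μ[{ω | Y ω ∈ B}.indicator (fun _ => (1 : ℝ)) | m] =ᵐ[μ] fun ω => (π (X ω) B).toReal)
    {ψ : E → ℝ} (hψ : Measurable ψ) {C : ℝ} (hψC : ∀ x, ‖ψ x‖ ≤ C)
    {h : Ω → ℝ} (hh : StronglyMeasurable[m] h) {D : ℝ} (hhD : ∀ ω, ‖h ω‖ ≤ D) :
    ∫ ω, ψ (Y ω) * h ω ∂μ = ∫ ω, (∫ y, ψ y ∂π (X ω)) * h ω ∂μ := by
  have hψY : Integrable (ψ ∘ Y) μ :=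
    .of_bound (hψ.comp hY).aestronglyMeasurable C (ae_of_all _ fun ω => hψC _)
  have hhψY : Integrable (h * ψ ∘ Y) μ :=
    hψY.bdd_mul (hh.mono hm).aestronglyMeasurable (ae_of_all _ hhD)
  simp_rw [mul_comm _ (h _)]
  calc ∫ ω, h ω * ψ (Y ω) ∂μ = ∫ ω, μ[h * ψ ∘ Y | m] ω ∂μ := (integral_condExp hm).symm
    _ = ∫ ω, h ω * ∫ y, ψ y ∂π (X ω) ∂μ := by
        refine integral_congr_ae ?_
        filter_upwards [condExp_mul_of_stronglyMeasurable_left hh hhψY hψY,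
          integral_kernel_comp_ae_eq_condExp hm hX hY hM hψ hψC] with ω hpull hmarkov
        rw [hpull, Pi.mul_apply, hmarkov]

theorem integral_integral_kernel_sub_mul (hm : m ≤ m₀) (hX : Measurable[m] X)
    (hY : Measurable[m₀] Y)
    (hM : ∀ B : Set E, MeasurableSet B →
      μ[{ω | Y ω ∈ B}.indicator (fun _ => (1 : ℝ)) | m] =ᵐ[μ] fun ω => (π (X ω) B).toReal)
    {ψ : E → ℝ} (hψ : Measurable ψ) {C : ℝ} (hψC : ∀ x, ‖ψ x‖ ≤ C) {f : Ω → ℝ}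
    (hf : Integrable f μ) {h : Ω → ℝ} (hh : StronglyMeasurable[m] h) {D : ℝ}
    (hhD : ∀ ω, ‖h ω‖ ≤ D) :
    ∫ ω, ((∫ y, ψ y ∂π (X ω)) - f ω) * h ω ∂μ
      = ∫ ω, ψ (Y ω) * h ω ∂μ - ∫ ω, f ω * h ω ∂μ := by
  have hh₀ : AEStronglyMeasurable h μ := (hh.mono hm).aestronglyMeasurable
  simp_rw [sub_mul]
  rw [integral_sub ((integrable_integral_kernel_comp hψ hψC (hX.mono hm le_rfl)).mul_bdd hh₀
      (ae_of_all _ hhD)) (hf.mul_bdd hh₀ (ae_of_all _ hhD)),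
    integral_comp_mul_eq_integral_kernel_mul hm hX hY hM hψ hψC hh hhD]

end MarkovProperty

theorem Finset.sum_range_succ_sub_eq_add_sum_shift {M : Type*} [AddCommGroup M] (a b : ℕ → M)
    {T : ℕ} (hb : b T = 0) :
    ∑ t ∈ Finset.range (T + 1), (a t - b t) = a 0 + ∑ t ∈ Finset.range T, (a (t + 1) - b t) := by
  rw [Finset.sum_sub_distrib, Finset.sum_sub_distrib, Finset.sum_range_succ' a,
    Finset.sum_range_succ b, hb]
  abel

theorem measurableSet_generateFrom_singletons_of_subset_Iic {t : ℕ} {S : Set ℕ}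
    (hS : S ⊆ Set.Iic t) :
    MeasurableSet[MeasurableSpace.generateFrom {S : Set ℕ | ∃ s ≤ t, S = {s}}] S := by
  rw [← S.biUnion_of_singleton]
  exact .biUnion S.to_countable fun s hs => .basic _ ⟨s, hS hs, rfl⟩

theorem measureReal_singleton_eq_sub_Icc_succ (ν : Measure ℕ) [IsFiniteMeasure ν] {t T : ℕ}
    (ht : t ≤ T) : ν.real {t} = ν.real (Set.Icc t T) - ν.real (Set.Icc (t + 1) T) := by
  have : Set.Icc t T = {t} ∪ Set.Icc (t + 1) T := by
    ext; simp only [Set.mem_Icc, Set.mem_union, Set.mem_singleton_iff]; omega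
  rw [this, measureReal_union (by simp) measurableSet_Icc, add_sub_cancel_right]

theorem measure_Icc_succ_eq_sub (ν : Measure ℕ) [IsFiniteMeasure ν] {t T : ℕ} (ht : t ≤ T) :
    ν (Set.Icc (t + 1) T) = ν (Set.Iic T) - ν (Set.Iic t) := by
  have : Set.Icc (t + 1) T = Set.Iic T \ Set.Iic t := by
    ext; simp only [Set.mem_Icc, Set.mem_sdiff, Set.mem_Iic]; omega
  rw [this, measure_sdiff (Set.Iic_subset_Iic.mpr ht) measurableSet_Iic.nullMeasurableSet
    (measure_ne_top _ _)]

theorem MeasureTheory.norm_measure_toReal_le_one {α : Type*} [MeasurableSpace α] (ν : Measure α)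
    [IsZeroOrProbabilityMeasure ν] (s : Set α) : ‖(ν s).toReal‖ ≤ 1 := by
  rw [Real.norm_of_nonneg ENNReal.toReal_nonneg]
  exact measureReal_le_one

section RandomizedStoppingTime

variable {Ω : Type*} {m m₀ : MeasurableSpace Ω} {κ : Ω → Measure ℕ} {T t : ℕ}

theorem measurable_measure_Icc_succ [∀ ω, IsFiniteMeasure (κ ω)]
    (hκ_supp : ∀ ω, κ ω (Set.Iic T) = 1) (hκ : Measurable[m] fun ω => κ ω (Set.Iic t))
    (ht : t ≤ T) : Measurable[m] fun ω => κ ω (Set.Icc (t + 1) T) := by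
  simp only [measure_Icc_succ_eq_sub _ ht, hκ_supp]
  exact measurable_const.sub hκ

theorem integral_mul_measure_singleton_toReal {μ : Measure Ω} [IsFiniteMeasure μ]
    [∀ ω, IsProbabilityMeasure (κ ω)] {f : Ω → ℝ} (hf : Integrable f μ)
    (hκt : Measurable[m₀] fun ω => κ ω (Set.Icc t T))
    (hκt' : Measurable[m₀] fun ω => κ ω (Set.Icc (t + 1) T)) (ht : t ≤ T) :
    ∫ ω, f ω * (κ ω {t}).toReal ∂μ
      = ∫ ω, f ω * (κ ω (Set.Icc t T)).toReal ∂μ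
        - ∫ ω, f ω * (κ ω (Set.Icc (t + 1) T)).toReal ∂μ := by
  have hint {S : Set ℕ} (hS : Measurable[m₀] fun ω => κ ω S) :
      Integrable (fun ω => f ω * (κ ω S).toReal) μ :=
    hf.mul_bdd hS.ennreal_toReal.aestronglyMeasurable
      (ae_of_all _ fun ω => norm_measure_toReal_le_one (κ ω) S)
  simp_rw [← integral_sub (hint hκt) (hint hκt'), ← mul_sub, ← measureReal_def,
    measureReal_singleton_eq_sub_Icc_succ _ ht]

end RandomizedStoppingTime

theorem stmt_18_general
    {Ω E : Type*} [m0 : MeasurableSpace Ω]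
    [MetricSpace E] [CompactSpace E] [MeasurableSpace E] [BorelSpace E]
    (μ : Measure Ω) [IsProbabilityMeasure μ]
    (T : ℕ)
    (ℱ : MeasureTheory.Filtration ℕ m0)
    (X : ℕ → Ω → E)
    (hX_adapted : ∀ t, t ≤ T → Measurable[ℱ t] (X t))
    (π : ℕ → Kernel E E) (hπ : ∀ t, IsMarkovKernel (π t))
    -- Markov property of X with respect to (F_t) and kernels (π_t):
    (hMarkov : ∀ t : ℕ, 1 ≤ t → t ≤ T → ∀ B : Set E, MeasurableSet B →
      (μ[Set.indicator {ω | X t ω ∈ B} (fun _ => (1 : ℝ)) | ℱ (t - 1)]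
        =ᵐ[μ] fun ω => (π t (X (t - 1) ω) B).toReal))
    -- κ is a randomized stopping time:
    (κ : Ω → Measure ℕ)
    (hκ_prob : ∀ ω, IsProbabilityMeasure (κ ω))
    (hκ_supp : ∀ ω, κ ω (Set.Iic T) = 1)
    (hκ_meas : ∀ t : ℕ, t ≤ T → ∀ B : Set ℕ,
      MeasurableSet[MeasurableSpace.generateFrom {S : Set ℕ | ∃ s ≤ t, S = {s}}] B →
      Measurable[ℱ t] (fun ω => κ ω B))
    -- test function φ ∈ C(I × E):
    (φ : ℕ → E → ℝ) (hφ : ∀ t, Continuous (φ t)) :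
    ∑ t ∈ Finset.range (T + 1), ∫ ω, φ t (X t ω) * (κ ω {t}).toReal ∂μ
      = (∫ ω, φ 0 (X 0 ω) ∂μ)
        + ∑ t ∈ Finset.range T,
            ∫ ω, ((∫ y, φ (t + 1) y ∂(π (t + 1) (X t ω))) - φ t (X t ω))
                  * (κ ω (Set.Icc (t + 1) T)).toReal ∂μ := by
  choose C hC using fun t => isCompact_univ.exists_bound_of_continuousOn (hφ t).continuousOn
  replace hC t x : ‖φ t x‖ ≤ C t := hC t x (Set.mem_univ x)
  have hX t (ht : t ≤ T) : Measurable (X t) := (hX_adapted t ht).mono (ℱ.le t) le_rfl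
  have hφX t (ht : t ≤ T) : Integrable (fun ω => φ t (X t ω)) μ :=
    .of_bound ((hφ t).measurable.comp (hX t ht)).aestronglyMeasurable (C t)
      (ae_of_all _ fun ω => hC t _)
  have hκ_Icc s : Measurable fun ω => κ ω (Set.Icc s T) :=
    (hκ_meas T le_rfl _ (measurableSet_generateFrom_singletons_of_subset_Iic
      Set.Icc_subset_Iic_self)).mono (ℱ.le T) le_rfl
  have hsingle t (ht : t ∈ Finset.range (T + 1)) :=
    integral_mul_measure_singleton_toReal (hφX t (Finset.mem_range_succ_iff.mp ht))
      (hκ_Icc t) (hκ_Icc (t + 1)) (Finset.mem_range_succ_iff.mp ht)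
  have hstep t (ht : t ∈ Finset.range T) := by
    have ht : t < T := Finset.mem_range.mp ht
    have hκ_adapted : Measurable[ℱ t] fun ω => κ ω (Set.Icc (t + 1) T) :=
      measurable_measure_Icc_succ hκ_supp
        (hκ_meas t ht.le _ (measurableSet_generateFrom_singletons_of_subset_Iic subset_rfl)) ht.le
    exact integral_integral_kernel_sub_mul (ℱ.le t) (hX_adapted t ht.le) (hX (t + 1) ht)
      (by simpa using hMarkov (t + 1) (by omega) ht) (hφ (t + 1)).measurable (hC (t + 1))
      (hφX t ht.le) hκ_adapted.ennreal_toReal.stronglyMeasurable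
      fun ω => norm_measure_toReal_le_one (κ ω) _
  rw [Finset.sum_congr rfl hsingle, Finset.sum_congr rfl hstep,
    Finset.sum_range_succ_sub_eq_add_sum_shift _ _ (by simp)]
  simp [show Set.Icc 0 T = Set.Iic T by ext; simp, hκ_supp]

theorem stmt_18
    {Ω E : Type*} [m0 : MeasurableSpace Ω]
    [MetricSpace E] [CompactSpace E] [MeasurableSpace E] [BorelSpace E]
    (μ : Measure Ω) [IsProbabilityMeasure μ]
    (T : ℕ) (hT : 1 ≤ T)
    (ℱ : MeasureTheory.Filtration ℕ m0)
    (X : ℕ → Ω → E)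
    (hX_adapted : ∀ t, t ≤ T → Measurable[ℱ t] (X t))
    (π : ℕ → Kernel E E) (hπ : ∀ t, IsMarkovKernel (π t))
    -- Markov property of X with respect to (F_t) and kernels (π_t):
    (hMarkov : ∀ t : ℕ, 1 ≤ t → t ≤ T → ∀ B : Set E, MeasurableSet B →
      (μ[Set.indicator {ω | X t ω ∈ B} (fun _ => (1 : ℝ)) | ℱ (t - 1)]
        =ᵐ[μ] fun ω => (π t (X (t - 1) ω) B).toReal))
    -- κ is a randomized stopping time:
    (κ : Ω → Measure ℕ)
    (hκ_prob : ∀ ω, IsProbabilityMeasure (κ ω))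
    (hκ_supp : ∀ ω, κ ω (Set.Iic T) = 1)
    (hκ_meas : ∀ t : ℕ, t ≤ T → ∀ B : Set ℕ,
      MeasurableSet[MeasurableSpace.generateFrom {S : Set ℕ | ∃ s ≤ t, S = {s}}] B →
      Measurable[ℱ t] (fun ω => κ ω B))
    -- test function φ ∈ C(I × E):
    (φ : ℕ → E → ℝ) (hφ : ∀ t, Continuous (φ t)) :
    ∑ t ∈ Finset.range (T + 1), ∫ ω, φ t (X t ω) * (κ ω {t}).toReal ∂μ
      = (∫ ω, φ 0 (X 0 ω) ∂μ)
        + ∑ t ∈ Finset.range T,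
            ∫ ω, ((∫ y, φ (t + 1) y ∂(π (t + 1) (X t ω))) - φ t (X t ω))
                  * (κ ω (Set.Icc (t + 1) T)).toReal ∂μ :=
  stmt_18_general (m0 := m0) μ T ℱ X hX_adapted π hπ hMarkov κ hκ_prob hκ_supp hκ_meas φ hφ
end

section
/- For every x ∈ E there exists a unique p*(x) ∈ [0, p̃] such that r(x) = s(x, p*(x)), and the price P(x) := inf{p ≥ 0 : r(x) ≤ s(x,p)} ∧ p_max satisfies P(x) = p*(x) ∧ p_max. Moreover the map x ↦ p*(x) is continuous on E, and consequently P is continuous on E. -/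
/- STATEMENT 19: Existence, uniqueness and continuity of the market-clearing price.
Context: (E,d) a metric space, p_max > 0, r : E → ℝ₊ and s : E × ℝ₊ → ℝ₊ continuous,
p ↦ s(x,p) strictly increasing with s(x,0) = 0, and there is p̃ ≥ 0 with
inf_x s(x,p̃) ≥ sup_x r(x) (stated pointwise: s(x,p̃) ≥ r(y) for all x,y).
The price is P(x) = inf{p ≥ 0 : r(x) ≤ s(x,p)} ∧ p_max. -/
theorem stmt_19
    {E : Type*} [MetricSpace E]
    (pmax : ℝ) (hpmax : 0 < pmax)
    (r : E → ℝ) (s : E → ℝ → ℝ)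
    (hr_nonneg : ∀ x, 0 ≤ r x) (hs_nonneg : ∀ x p, 0 ≤ p → 0 ≤ s x p)
    (hr_cont : Continuous r)
    (hs_cont : Continuous (fun q : E × ℝ => s q.1 q.2))
    (hs_mono : ∀ x, StrictMonoOn (s x) (Set.Ici (0 : ℝ)))
    (hs_zero : ∀ x, s x 0 = 0)
    (ptil : ℝ) (hptil : 0 ≤ ptil)
    (hbig : ∀ x y : E, r y ≤ s x ptil)
    (P : E → ℝ)
    (hP : ∀ x, P x = min (sInf {p : ℝ | 0 ≤ p ∧ r x ≤ s x p}) pmax) :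
    ∃ pstar : E → ℝ,
      (∀ x, pstar x ∈ Set.Icc 0 ptil ∧ r x = s x (pstar x)) ∧
      (∀ x q, q ∈ Set.Icc 0 ptil → r x = s x q → q = pstar x) ∧
      (∀ x, P x = min (pstar x) pmax) ∧
      Continuous pstar ∧ Continuous P := by
  have hkx : ∀ x : E, Continuous (fun p => s x p) :=
    fun x => hs_cont.comp (continuous_const.prodMk continuous_id)
  -- existence
  have hex : ∀ x : E, ∃ p ∈ Set.Icc (0:ℝ) ptil, s x p = r x := by
    intro x
    have h := intermediate_value_Icc hptil (hkx x).continuousOn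
    have hmem : r x ∈ Set.Icc (s x 0) (s x ptil) :=
      ⟨by rw [hs_zero x]; exact hr_nonneg x, hbig x x⟩
    obtain ⟨p, hp, hsp⟩ := h hmem
    exact ⟨p, hp, hsp⟩
  choose pstar hmem heq using hex
  have hmem' : ∀ x, pstar x ∈ Set.Icc (0:ℝ) ptil := hmem
  have hreq : ∀ x, r x = s x (pstar x) := fun x => (heq x).symm
  -- uniqueness
  have huniq : ∀ x q, q ∈ Set.Icc (0:ℝ) ptil → r x = s x q → q = pstar x := by
    intro x q hq hrq
    exact (hs_mono x).injOn (Set.mem_Ici.mpr hq.1) (Set.mem_Ici.mpr (hmem x).1)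
      (by rw [← hrq, hreq x])
  -- sInf identification
  have hinf : ∀ x, sInf {p : ℝ | 0 ≤ p ∧ r x ≤ s x p} = pstar x := by
    intro x
    have hm : pstar x ∈ {p : ℝ | 0 ≤ p ∧ r x ≤ s x p} := ⟨(hmem x).1, (hreq x).le⟩
    apply le_antisymm
    · exact csInf_le ⟨0, fun q hq => hq.1⟩ hm
    · apply le_csInf ⟨pstar x, hm⟩
      intro q hq
      by_contra h
      push_neg at h
      have : s x q < s x (pstar x) :=
        (hs_mono x) (Set.mem_Ici.mpr hq.1) (Set.mem_Ici.mpr (hmem x).1) h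
      exact absurd hq.2 (by rw [hreq x]; exact not_le.mpr this)
  have hPmin : ∀ x, P x = min (pstar x) pmax := by
    intro x; rw [hP x, hinf x]
  -- continuity
  have hcont : Continuous pstar := by
    rw [continuous_iff_continuousAt]
    intro x
    rw [ContinuousAt, Metric.tendsto_nhds]
    intro ε hε
    have hup : ∀ᶠ y in nhds x, r y < s y (pstar x + ε) := by
      have hc1 : ContinuousAt (fun y => s y (pstar x + ε)) x :=
        (hs_cont.comp (continuous_id.prodMk continuous_const)).continuousAt
      refine hr_cont.continuousAt.eventually_lt hc1 ?_
      rw [hreq x]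
      exact (hs_mono x) (Set.mem_Ici.mpr (hmem x).1)
        (Set.mem_Ici.mpr (le_trans (hmem x).1 (by linarith))) (by linarith)
    have hlo : ∀ᶠ y in nhds x, pstar x - ε < pstar y := by
      by_cases hc : pstar x - ε < 0
      · exact Filter.Eventually.of_forall fun y => lt_of_lt_of_le hc (hmem y).1
      · push_neg at hc
        have hlt : s x (pstar x - ε) < r x := by
          rw [hreq x]
          exact (hs_mono x) (Set.mem_Ici.mpr hc) (Set.mem_Ici.mpr (hmem x).1)
            (by linarith)
        have hc1 : ContinuousAt (fun y => s y (pstar x - ε)) x :=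
          (hs_cont.comp (continuous_id.prodMk continuous_const)).continuousAt
        have h2 : ∀ᶠ y in nhds x, s y (pstar x - ε) < r y :=
          hc1.eventually_lt hr_cont.continuousAt hlt
        refine h2.mono fun y hy => ?_
        by_contra h
        push_neg at h
        have : s y (pstar y) ≤ s y (pstar x - ε) :=
          (hs_mono y).monotoneOn (Set.mem_Ici.mpr (hmem y).1) (Set.mem_Ici.mpr hc) h
        rw [← hreq y] at this
        linarith
    filter_upwards [hup, hlo] with y h1 h2
    have hub : pstar y < pstar x + ε := by
      have : s y (pstar y) < s y (pstar x + ε) := by rw [← hreq y]; exact h1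
      exact (hs_mono y).lt_iff_lt (Set.mem_Ici.mpr (hmem y).1)
        (Set.mem_Ici.mpr (le_trans (hmem x).1 (by linarith))) |>.mp this
    rw [Real.dist_eq, abs_sub_lt_iff]
    constructor <;> linarith
  have hPeq : P = fun x => min (pstar x) pmax := funext hPmin
  refine ⟨pstar, fun x => ⟨hmem x, hreq x⟩, huniq, hPmin, hcont, ?_⟩
  rw [hPeq]
  exact hcont.min continuous_const
end
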